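/- Let Γ be a simplicial complex and let a, b be two distinct free vertices of Γ contained in distinct facets E and F respectively, with |E| ≥ 3 and |F| ≥ 3. If Γ + ⟨{a,b}⟩ is vertex decomposable, then Γ is vertex decomposable. -/

import Mathlib

open Finset SimpleGraph

variable {V : Type*} [DecidableEq V]

/-- An abstract simplicial complex: contains the empty face and is downward closed. -/
def IsComplex (K : Set (Finset V)) : Prop :=
  (∅ : Finset V) ∈ K ∧ ∀ F ∈ K, ∀ G ⊆ F, G ∈ K

/-- `F` is a facet (maximal face) of `K`. -/
def IsFacet (K : Set (Finset V)) (F : Finset V) : Prop :=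
  F ∈ K ∧ ∀ G ∈ K, F ⊆ G → F = G

/-- `K` is pure: all facets have the same cardinality. -/
def IsPure (K : Set (Finset V)) : Prop :=
  ∀ F G, IsFacet K F → IsFacet K G → F.card = G.card

/-- Deletion `K - v`. -/
def del (K : Set (Finset V)) (v : V) : Set (Finset V) := {F ∈ K | v ∉ F}

/-- The link of a vertex. -/
def link (K : Set (Finset V)) (v : V) : Set (Finset V) :=
  {F | v ∉ F ∧ insert v F ∈ K}

/-- A shedding vertex: a vertex such that no face of the link is a facet of the deletion. -/
def IsSheddingVertex (K : Set (Finset V)) (v : V) : Prop :=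
  ({v} : Finset V) ∈ K ∧ ∀ F ∈ link K v, ¬ IsFacet (del K v) F

/-- `K` is a (possibly empty-face-only) simplex: the power set of some finset. -/
def IsSimplexComplex (K : Set (Finset V)) : Prop :=
  ∃ F : Finset V, K = {G | G ⊆ F}

/-- Vertex decomposability. -/
inductive VertexDecomposable : Set (Finset V) → Prop
  | simplex (K : Set (Finset V)) : IsSimplexComplex K → VertexDecomposable K
  | shed (K : Set (Finset V)) (v : V) : IsSheddingVertex K v →
      VertexDecomposable (link K v) → VertexDecomposable (del K v) →
      VertexDecomposable K

/-- The complex generated by a family of finsets. -/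
def gen (S : Set (Finset V)) : Set (Finset V) := {G | ∃ F ∈ S, G ⊆ F}

/-- A shelling order of the facets of `K`. -/
def IsShelling (K : Set (Finset V)) (l : List (Finset V)) : Prop :=
  l.Nodup ∧ (∀ F, IsFacet K F ↔ F ∈ l) ∧
  ∀ i : ℕ, (h : i + 1 < l.length) →
    (∃ F, IsFacet (gen {F | F ∈ l.take (i+1)} ∩ gen {l.get ⟨i+1, h⟩}) F) ∧
    ∀ F, IsFacet (gen {F | F ∈ l.take (i+1)} ∩ gen {l.get ⟨i+1, h⟩}) F →
      F.card + 1 = (l.get ⟨i+1, h⟩).card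

def Shellable (K : Set (Finset V)) : Prop := ∃ l, IsShelling K l

/-- Two facets are adjacent (intersect in codimension one). -/
def FacetAdj (K : Set (Finset V)) (F G : Finset V) : Prop :=
  IsFacet K F ∧ IsFacet K G ∧ (F ∩ G).card + 1 = F.card ∧ (F ∩ G).card + 1 = G.card

/-- A pure complex is strongly connected (connected in codimension 1). -/
def StronglyConnected (K : Set (Finset V)) : Prop :=
  IsPure K ∧ ∀ F G, IsFacet K F → IsFacet K G → Relation.ReflTransGen (FacetAdj K) F G

/-- The clique complex of a graph. -/
def cliqueComplex (G : SimpleGraph V) : Set (Finset V) := {F | G.IsClique (F : Set V)}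

/-- The pure `i`-skeleton of `K`: generated by the faces of dimension `i`. -/
def pureSkeleton (K : Set (Finset V)) (i : ℕ) : Set (Finset V) :=
  {G | ∃ F ∈ K, F.card = i + 1 ∧ G ⊆ F}

/-- The link of a face. -/
def linkFace (K : Set (Finset V)) (F : Finset V) : Set (Finset V) :=
  {G | Disjoint F G ∧ F ∪ G ∈ K}

section Homology
variable (k : Type*) [Field k]

/-- Boundary of a single face, w.r.t. a linear order `lo` on the vertices. -/
noncomputable def bdFace (lo : LinearOrder V) (F : Finset V) : Finset V →₀ k :=
  letI := lo
  ∑ v ∈ F, ((-1 : k) ^ ((F.filter (fun w => w < v)).card)) • Finsupp.single (F.erase v) (1 : k)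

/-- The boundary operator of the augmented oriented chain complex, w.r.t. `lo`. -/
noncomputable def bd (lo : LinearOrder V) (c : Finset V →₀ k) : Finset V →₀ k :=
  c.sum fun F a => a • bdFace k lo F

/-- The reduced homology of `K` in the degree of faces of cardinality `j`
(i.e. dimension `j - 1`) vanishes over `k`. -/
def HomologyVanishes (K : Set (Finset V)) (j : ℕ) : Prop :=
  ∀ lo : LinearOrder V, ∀ c : Finset V →₀ k,
    (∀ F ∈ c.support, F ∈ K ∧ F.card = j) → bd k lo c = 0 →
      ∃ d : Finset V →₀ k, (∀ F ∈ d.support, F ∈ K ∧ F.card = j + 1) ∧ bd k lo d = c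

/-- Reisner's criterion: `K` is Cohen–Macaulay over the field `k`. -/
def IsCMover (K : Set (Finset V)) : Prop :=
  ∀ F ∈ K, ∀ j : ℕ, (∃ G ∈ linkFace K F, j < G.card) →
    HomologyVanishes k (linkFace K F) j

/-- `K` is sequentially Cohen–Macaulay over `k`. -/
def IsSeqCMover (K : Set (Finset V)) : Prop :=
  ∀ i : ℕ, IsCMover k (pureSkeleton K i)

/-- The core of a complex. -/
def core (K : Set (Finset V)) : Set (Finset V) :=
  {F ∈ K | ∀ v ∈ F, ∃ G, IsFacet K G ∧ v ∉ G}

/-- The top reduced homology of `K` is one-dimensional (`≅ k`), where the top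
cardinality of a face of `K` is `m`. -/
def TopHomologyIsK (K : Set (Finset V)) (m : ℕ) : Prop :=
  (∃ G ∈ K, G.card = m) ∧ (∀ G ∈ K, G.card ≤ m) ∧
  ∀ lo : LinearOrder V, ∃ c : Finset V →₀ k, c ≠ 0 ∧
    (∀ F ∈ c.support, F ∈ K ∧ F.card = m) ∧ bd k lo c = 0 ∧
    ∀ c' : Finset V →₀ k, (∀ F ∈ c'.support, F ∈ K ∧ F.card = m) → bd k lo c' = 0 →
      ∃ a : k, c' = a • c

/-- Stanley's criterion: `K` is Gorenstein over `k`. -/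
def IsGorensteinOver (K : Set (Finset V)) : Prop :=
  ∀ F ∈ core K, ∃ m : ℕ,
    TopHomologyIsK k (linkFace (core K) F) m ∧
    ∀ j : ℕ, j < m → HomologyVanishes k (linkFace (core K) F) j

end Homology

/-- Adding a new facet `F` to a complex. -/
def addFace {V : Type} [DecidableEq V] (K : Set (Finset V)) (F : Finset V) :
    Set (Finset V) :=
  K ∪ {G | G ⊆ F}

/-- A free vertex: a vertex contained in exactly one facet. -/
def IsFreeVertex {V : Type} [DecidableEq V] (K : Set (Finset V)) (a : V) : Prop :=
  ({a} : Finset V) ∈ K ∧ ∃! F, IsFacet K F ∧ a ∈ F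

/-!
Induct on a vertex decomposition of `Γ + ⟨{a,b}⟩`. It is not a simplex, since neither `E` nor
`{a,b}` contains the other. If it sheds `a`, the deletion is `Γ - a`, the link of `a` in `Γ` is
the simplex on `E \ {a}`, and `E \ {a}` is not a facet of `Γ - a`, so `a` is a shedding vertex of
`Γ`; symmetrically for `b`. Any other shedding vertex `v` avoids `E` and `F`: otherwise `E \ {v}`,
which has at least two vertices and so is not inside `{a,b}`, would be a face of the link that is
a facet of the deletion. Hence deleting `v` commutes with adding `{a,b}`, the link of `v` is the
same in both complexes, and all hypotheses pass to `Γ - v`.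
-/

theorem VertexDecomposable.finite {K : Set (Finset V)} (h : VertexDecomposable K) : K.Finite := by
  induction h with
  | simplex K hK =>
    obtain ⟨F, rfl⟩ := hK
    exact F.powerset.finite_toSet.subset fun G hG => mem_powerset.2 hG
  | shed K v _ _ _ hlink hdel =>
    refine (hdel.union (hlink.image (insert v))).subset fun G hG => ?_
    by_cases hv : v ∈ G
    · exact Or.inr ⟨G.erase v, ⟨notMem_erase v G, by rwa [insert_erase hv]⟩, insert_erase hv⟩
    · exact Or.inl ⟨hG, hv⟩

section

variable {V : Type*} {K : Set (Finset V)}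

theorem exists_isFacet_superset (hfin : K.Finite) {G : Finset V} (hG : G ∈ K) :
    ∃ H, IsFacet K H ∧ G ⊆ H := by
  obtain ⟨H, hGH, hH⟩ := hfin.exists_le_maximal hG
  exact ⟨H, ⟨hH.prop, fun H' hH' hHH' => le_antisymm hHH' (hH.2 hH' hHH')⟩, hGH⟩

theorem isComplex_del (hK : IsComplex K) (v : V) : IsComplex (del K v) :=
  ⟨⟨hK.1, notMem_empty v⟩, fun G hG H hHG => ⟨hK.2 G hG.1 H hHG, fun hv => hG.2 (hHG hv)⟩⟩

theorem isFacet_del_of_notMem {E : Finset V} (hE : IsFacet K E) {v : V}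
    (hv : v ∉ E) : IsFacet (del K v) E :=
  ⟨⟨hE.1, hv⟩, fun G hG hEG => hE.2 G hG.1 hEG⟩

end

theorem not_subset_pair {G : Finset V} {a b : V} (hbG : b ∉ G) (hG : 2 ≤ G.card) :
    ¬ G ⊆ {a, b} := by
  rw [pair_comm, subset_insert_iff_of_notMem hbG]
  intro hGa
  have := card_le_card hGa
  rw [card_singleton] at this
  omega

section AddFace

variable {V : Type} [DecidableEq V] {K : Set (Finset V)}

theorem del_addFace (K : Set (Finset V)) (σ : Finset V) (v : V) :
    del (addFace K σ) v = addFace (del K v) (σ.erase v) := by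
  ext G
  simp only [del, addFace, Set.mem_union, Set.mem_ofPred_eq, subset_erase]
  tauto

theorem del_addFace_of_notMem {σ : Finset V} {v : V} (hv : v ∉ σ) :
    del (addFace K σ) v = addFace (del K v) σ := by
  rw [del_addFace, erase_eq_of_notMem hv]

theorem addFace_of_mem (hK : IsComplex K) {σ : Finset V} (hσ : σ ∈ K) : addFace K σ = K :=
  Set.union_eq_left.2 fun G hG => hK.2 σ hσ G hG

theorem del_addFace_insert (hK : IsComplex K) {τ : Finset V} (hτ : τ ∈ K) (v : V) :
    del (addFace K (insert v τ)) v = del K v := by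
  rw [del_addFace]
  exact addFace_of_mem (isComplex_del hK v)
    ⟨hK.2 τ hτ _ (erase_insert_subset v τ), notMem_erase v _⟩

theorem link_addFace_of_notMem {σ : Finset V} {v : V} (hv : v ∉ σ) :
    link (addFace K σ) v = link K v := by
  ext G
  refine ⟨fun ⟨hvG, hG⟩ => ⟨hvG, hG.resolve_right fun hσ => hv (hσ (mem_insert_self v G))⟩,
    fun ⟨hvG, hG⟩ => ⟨hvG, Or.inl hG⟩⟩

theorem isFacet_addFace {G σ : Finset V} (hG : IsFacet K G) (hGσ : ¬ G ⊆ σ) :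
    IsFacet (addFace K σ) G :=
  ⟨Or.inl hG.1, fun H hH hGH =>
    hH.elim (fun hHK => hG.2 H hHK hGH) fun hHσ => absurd (hGH.trans hHσ) hGσ⟩

theorem not_isSimplexComplex_addFace {E σ : Finset V} (hE : IsFacet K E) (hEσ : ¬ E ⊆ σ)
    (hσE : ¬ σ ⊆ E) : ¬ IsSimplexComplex (addFace K σ) := by
  rintro ⟨W, hW⟩
  have hmem : ∀ G ∈ addFace K σ, G ⊆ W := fun G hG => by rw [hW] at hG; exact hG
  have hWmem : W ∈ addFace K σ := by rw [hW]; exact Subset.refl W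
  rcases hWmem with hWK | hWσ
  · exact hσE (hE.2 W hWK (hmem E (Or.inl hE.1)) ▸ hmem σ (Or.inr (Subset.refl σ)))
  · exact hEσ ((hmem E (Or.inl hE.1)).trans hWσ)

theorem isSheddingVertex_of_addFace {σ : Finset V} {v : V} (hv : v ∉ σ)
    (hshed : IsSheddingVertex (addFace K σ) v)
    (hσ : ∀ G, IsFacet (del K v) G → ¬ G ⊆ σ) : IsSheddingVertex K v := by
  refine ⟨hshed.1.resolve_right fun h => hv (h (mem_singleton_self v)),
    fun G hG hfac => hshed.2 G (by rwa [link_addFace_of_notMem hv]) ?_⟩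
  rw [del_addFace_of_notMem hv]
  exact isFacet_addFace hfac (hσ G hfac)

end AddFace

namespace IsFreeVertex

variable {V : Type} [DecidableEq V] {K : Set (Finset V)} {a : V} {E : Finset V}

theorem eq_of_isFacet (ha : IsFreeVertex K a) (hE : IsFacet K E) (haE : a ∈ E)
    {G : Finset V} (hG : IsFacet K G) (haG : a ∈ G) : G = E :=
  ha.2.unique ⟨hG, haG⟩ ⟨hE, haE⟩

theorem subset_of_mem (ha : IsFreeVertex K a) (hfin : K.Finite) (hE : IsFacet K E)
    (haE : a ∈ E) {G : Finset V} (hG : G ∈ K) (haG : a ∈ G) : G ⊆ E := by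
  obtain ⟨H, hH, hGH⟩ := exists_isFacet_superset hfin hG
  exact ha.eq_of_isFacet hE haE hH (hGH haG) ▸ hGH

theorem del_of_notMem (ha : IsFreeVertex K a) (hfin : K.Finite) (hE : IsFacet K E)
    (haE : a ∈ E) {v : V} (hva : v ≠ a) (hvE : v ∉ E) : IsFreeVertex (del K v) a := by
  refine ⟨⟨ha.1, by simpa using hva⟩, E, ⟨isFacet_del_of_notMem hE hvE, haE⟩, ?_⟩
  rintro G ⟨hG, haG⟩
  exact hG.2 E (isFacet_del_of_notMem hE hvE).1 (ha.subset_of_mem hfin hE haE hG.1.1 haG)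

theorem link_eq (ha : IsFreeVertex K a) (hK : IsComplex K) (hfin : K.Finite)
    (hE : IsFacet K E) (haE : a ∈ E) : link K a = {G | G ⊆ E.erase a} := by
  ext G
  refine ⟨fun ⟨haG, hG⟩ => subset_erase.2 ⟨(subset_insert a G).trans
      (ha.subset_of_mem hfin hE haE hG (mem_insert_self a G)), haG⟩, fun hG => ?_⟩
  have hGE := subset_erase.1 hG
  exact ⟨hGE.2, hK.2 E hE.1 _ (insert_subset haE hGE.1)⟩

theorem isSheddingVertex (ha : IsFreeVertex K a) (hK : IsComplex K) (hfin : K.Finite)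
    (hE : IsFacet K E) (haE : a ∈ E) (h : ¬ IsFacet (del K a) (E.erase a)) :
    IsSheddingVertex K a := by
  refine ⟨ha.1, fun G hG hfac => h ?_⟩
  rw [ha.link_eq hK hfin hE haE] at hG
  exact hfac.2 _ ⟨hK.2 E hE.1 _ (erase_subset a E), notMem_erase a E⟩ hG ▸ hfac

theorem isFacet_del_erase (ha : IsFreeVertex K a) (hK : IsComplex K) (hfin : K.Finite)
    (hE : IsFacet K E) (haE : a ∈ E) {v : V} (hva : v ≠ a) :
    IsFacet (del K v) (E.erase v) := by
  refine ⟨⟨hK.2 E hE.1 _ (erase_subset v E), notMem_erase v E⟩, fun H hH hEH => ?_⟩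
  have haH : a ∈ H := hEH (mem_erase.2 ⟨hva.symm, haE⟩)
  exact hEH.antisymm (subset_erase.2 ⟨ha.subset_of_mem hfin hE haE hH.1 haH, hH.2⟩)

theorem notMem_of_isSheddingVertex_addFace (ha : IsFreeVertex K a) (hK : IsComplex K)
    (hfin : K.Finite) (hE : IsFacet K E) (haE : a ∈ E) {σ : Finset V} {v : V} (hva : v ≠ a)
    (hshed : IsSheddingVertex (addFace K σ) v) (hEσ : ¬ E.erase v ⊆ σ) : v ∉ E := by
  intro hvE
  refine hshed.2 (E.erase v) ⟨notMem_erase v E, Or.inl (by rw [insert_erase hvE]; exact hE.1)⟩ ?_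
  rw [del_addFace]
  exact isFacet_addFace (ha.isFacet_del_erase hK hfin hE haE hva)
    fun h => hEσ (h.trans (erase_subset v σ))

theorem vertexDecomposable_of_addFace_insert (ha : IsFreeVertex K a) (hK : IsComplex K)
    (hfin : K.Finite) (hE : IsFacet K E) (haE : a ∈ E) {τ : Finset V} (hτ : τ ∈ K)
    (hshed : IsSheddingVertex (addFace K (insert a τ)) a)
    (hdel : VertexDecomposable (del (addFace K (insert a τ)) a)) : VertexDecomposable K := by
  rw [del_addFace_insert hK hτ] at hdel
  refine .shed K a (ha.isSheddingVertex hK hfin hE haE fun hfac => hshed.2 (E.erase a)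
    ⟨notMem_erase a E, Or.inl (by rw [insert_erase haE]; exact hE.1)⟩ ?_)
    (.simplex _ ⟨_, ha.link_eq hK hfin hE haE⟩) hdel
  rwa [del_addFace_insert hK hτ]

theorem not_isFacet_subset_pair {b : V} {F : Finset V} (ha : IsFreeVertex K a)
    (hb : IsFreeVertex K b) (hE : IsFacet K E) (hF : IsFacet K F) (haE : a ∈ E) (hbF : b ∈ F)
    (hbE : b ∉ E) (haF : a ∉ F) (hE2 : 2 ≤ E.card) (hF2 : 2 ≤ F.card) {G : Finset V}
    (hG : IsFacet K G) : ¬ G ⊆ {a, b} := by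
  intro hGab
  by_cases haG : a ∈ G
  · exact not_subset_pair hbE hE2 (ha.eq_of_isFacet hE haE hG haG ▸ hGab)
  by_cases hbG : b ∈ G
  · exact not_subset_pair haF hF2 (pair_comm a b ▸ hb.eq_of_isFacet hF hbF hG hbG ▸ hGab)
  rw [subset_insert_iff_of_notMem haG, subset_singleton_iff] at hGab
  rcases hGab with rfl | rfl
  · exact singleton_ne_empty a (hG.2 {a} ha.1 (empty_subset _)).symm
  · exact hbG (mem_singleton_self b)

end IsFreeVertex

theorem VertexDecomposable.of_addFace_pair {V : Type} [DecidableEq V] {K : Set (Finset V)}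
    {a b : V} {E F : Finset V} (hK : IsComplex K) (hE : IsFacet K E) (hF : IsFacet K F)
    (haE : a ∈ E) (hbF : b ∈ F) (hbE : b ∉ E) (haF : a ∉ F) (ha : IsFreeVertex K a)
    (hb : IsFreeVertex K b) (hE3 : 3 ≤ E.card) (hF3 : 3 ≤ F.card)
    (h : VertexDecomposable (addFace K {a, b})) : VertexDecomposable K := by
  have hfin : K.Finite := h.finite.subset Set.subset_union_left
  generalize hL : addFace K {a, b} = L at h
  induction h generalizing K with
  | simplex L hsimplex =>
    subst hL
    exact absurd hsimplex (not_isSimplexComplex_addFace hE (not_subset_pair hbE (by omega))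
      fun h => hbE (h (mem_insert_of_mem (mem_singleton_self b))))
  | shed L v hshed _ hdel _ ih =>
    subst hL
    by_cases hva : v = a
    · subst hva
      exact ha.vertexDecomposable_of_addFace_insert hK hfin hE haE hb.1 hshed hdel
    by_cases hvb : v = b
    · subst hvb
      rw [pair_comm] at hshed hdel
      exact hb.vertexDecomposable_of_addFace_insert hK hfin hF hbF ha.1 hshed hdel
    have hvab : v ∉ ({a, b} : Finset V) := by simp [hva, hvb]
    have hvE : v ∉ E := ha.notMem_of_isSheddingVertex_addFace hK hfin hE haE hva hshed
      (not_subset_pair (fun h => hbE (mem_of_mem_erase h)) (by grind [pred_card_le_card_erase]))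
    have hvF : v ∉ F := hb.notMem_of_isSheddingVertex_addFace hK hfin hF hbF hvb
      (pair_comm a b ▸ hshed)
      (not_subset_pair (fun h => haF (mem_of_mem_erase h)) (by grind [pred_card_le_card_erase]))
    have ha' := ha.del_of_notMem hfin hE haE hva hvE
    have hb' := hb.del_of_notMem hfin hF hbF hvb hvF
    have hE' := isFacet_del_of_notMem hE hvE
    have hF' := isFacet_del_of_notMem hF hvF
    refine .shed K v (isSheddingVertex_of_addFace hvab hshed fun G hG =>
        ha'.not_isFacet_subset_pair hb' hE' hF' haE hbF hbE haF (by omega) (by omega) hG) ?_ ?_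
    · rwa [← link_addFace_of_notMem hvab]
    · exact ih (isComplex_del hK v) hE' hF' ha' hb' (hfin.subset fun _ hG => hG.1)
        (del_addFace_of_notMem hvab).symm

theorem stmt8_general {V : Type} [DecidableEq V] (K : Set (Finset V)) (hK : IsComplex K)
    (a b : V) (E F : Finset V) (hEF : E ≠ F)
    (hE : IsFacet K E) (hF : IsFacet K F) (haE : a ∈ E) (hbF : b ∈ F)
    (ha : IsFreeVertex K a) (hb : IsFreeVertex K b)
    (hE3 : 3 ≤ E.card) (hF3 : 3 ≤ F.card) :
    VertexDecomposable (addFace K {a, b}) → VertexDecomposable K :=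
  VertexDecomposable.of_addFace_pair hK hE hF haE hbF
    (fun hbE => hEF (hb.eq_of_isFacet hF hbF hE hbE))
    (fun haF => hEF (ha.eq_of_isFacet hE haE hF haF).symm) ha hb hE3 hF3

theorem stmt8 {V : Type} [DecidableEq V] (K : Set (Finset V)) (hK : IsComplex K)
    (a b : V) (E F : Finset V) (hab : a ≠ b) (hEF : E ≠ F)
    (hE : IsFacet K E) (hF : IsFacet K F) (haE : a ∈ E) (hbF : b ∈ F)
    (ha : IsFreeVertex K a) (hb : IsFreeVertex K b)
    (hE3 : 3 ≤ E.card) (hF3 : 3 ≤ F.card) :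
    VertexDecomposable (addFace K {a, b}) → VertexDecomposable K :=
  stmt8_general K hK a b E F hEF hE hF haE hbF ha hb hE3 hF3
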